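/- For every real u ≥ 1 and every t ∈ ℝ, | (1 + 1/(2u))^{−it} − exp( −it/(2u) + it/(8u²) ) | ≤ |t| u^{−3}, where (1+1/(2u))^{−it} := exp( −it·log(1+1/(2u)) ) with the real logarithm. -/

import Mathlib

/-!
Both sides have modulus one, so their distance is at most `|t|` times the distance of the phases,
`|log (1 + s) - (s - s ^ 2 / 2)|` with `s = 1 / (2u) ≤ 1/2`. This is the tail of the logarithmic
series, bounded by `s ^ 3 / (1 - s) ≤ 2 s ^ 3 = 1 / (4 u ^ 3)`.
-/

open Complex in
lemma norm_exp_I_mul_ofReal_sub_exp_I_mul_ofReal_le (a b : ℝ) :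
    ‖exp (I * a) - exp (I * b)‖ ≤ |a - b| := by
  have h : exp (I * a) - exp (I * b) = exp (I * b) * (exp (I * ↑(a - b)) - 1) := by
    rw [mul_sub, ← exp_add]
    push_cast
    ring_nf
  rw [h, norm_mul, norm_exp_I_mul_ofReal, one_mul, ← Real.norm_eq_abs]
  exact Real.norm_exp_I_mul_ofReal_sub_one_le

lemma abs_log_one_add_sub_le {x : ℝ} (hx : |x| < 1) :
    |Real.log (1 + x) - (x - x ^ 2 / 2)| ≤ |x| ^ 3 / (1 - |x|) := by
  have h := Real.abs_log_sub_add_sum_range_le (x := -x) (by rwa [abs_neg]) 2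
  rw [abs_neg, sub_neg_eq_add] at h
  convert h using 2
  simp only [Finset.sum_range_succ, Finset.sum_range_zero]
  ring

lemma abs_log_one_add_inv_two_mul_sub_le {u : ℝ} (hu : 1 ≤ u) :
    |Real.log (1 + 1 / (2 * u)) - (1 / (2 * u) - 1 / (8 * u ^ 2))| ≤ 1 / u ^ 3 := by
  have hu0 : 0 < u := by linarith
  have hs : |1 / (2 * u)| = 1 / (2 * u) := abs_of_pos (by positivity)
  have hs_le : 1 / (2 * u) ≤ 1 / 2 := by gcongr; linarith
  have h := abs_log_one_add_sub_le (x := 1 / (2 * u)) (by rw [hs]; linarith)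
  rw [hs] at h
  calc _ = |Real.log (1 + 1 / (2 * u)) - (1 / (2 * u) - (1 / (2 * u)) ^ 2 / 2)| := by
          congr 3; field_simp; ring
    _ ≤ (1 / (2 * u)) ^ 3 / (1 - 1 / (2 * u)) := h
    _ ≤ (1 / (2 * u)) ^ 3 / (1 / 2) := by gcongr; linarith
    _ = 1 / (4 * u ^ 3) := by field_simp; ring
    _ ≤ 1 / u ^ 3 := by gcongr; linarith [pow_pos hu0 3]

/-- The Taylor approximation underlying (4.36) of Jutila–Motohashi:
`(1+1/(2u))^{−it} = exp(−it/(2u) + it/(8u²)) + O(|t|/u³)` for `u ≥ 1`,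
where `(1+1/(2u))^{−it} := exp(−it log(1+1/(2u)))` with the real logarithm. -/
theorem stmt_10 (u t : ℝ) (hu : 1 ≤ u) :
    ‖Complex.exp (-Complex.I * t * Real.log (1 + 1 / (2 * u))) -
        Complex.exp (-Complex.I * t / (2 * u) + Complex.I * t / (8 * u ^ 2))‖ ≤
      |t| / u ^ 3 := by
  have hu0 : (u : ℂ) ≠ 0 := by exact_mod_cast (by positivity : u ≠ 0)
  have phase : -Complex.I * t / (2 * u) + Complex.I * t / (8 * u ^ 2) =
      Complex.I * ((-(t * (1 / (2 * u) - 1 / (8 * u ^ 2))) : ℝ) : ℂ) := by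
    push_cast
    field_simp
    ring
  rw [phase, show -Complex.I * t * Real.log (1 + 1 / (2 * u)) =
      Complex.I * ↑(-(t * Real.log (1 + 1 / (2 * u)))) by push_cast; ring]
  refine (norm_exp_I_mul_ofReal_sub_exp_I_mul_ofReal_le _ _).trans ?_
  rw [show -(t * Real.log (1 + 1 / (2 * u))) -
      -(t * (1 / (2 * u) - 1 / (8 * u ^ 2))) =
      -(t * (Real.log (1 + 1 / (2 * u)) - (1 / (2 * u) - 1 / (8 * u ^ 2)))) by ring,
    abs_neg, abs_mul, div_eq_mul_one_div |t|]
  exact mul_le_mul_of_nonneg_left (abs_log_one_add_inv_two_mul_sub_le hu) (abs_nonneg t)
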